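/- Let n ≥ 2, let c be a coloring of n strands, set t = t_{c_n}, let j₀ ∈ {1,…,μ} and s = t_{j₀}, and let c⁺ be the coloring of n+1 strands with c⁺_i = c_i for i ≤ n and c⁺_{n+1} = j₀. Suppose A is an (n−1)×(n−1) matrix over Λ_μ and v is a row vector of length n−1 over Λ_μ such that (A, v) satisfies the boundary relation for c, and let M = [[A,0],[v,1]]. Let G'' be the n×n matrix equal to the identity except in its last 2×2 diagonal block, which equals [[1, 1 − s^{−1}],[0, s^{−1}t^{−1}]]. Then for every m ∈ Λ_μ: F(c⁺, s·t·m, M·G'') = (t − t^{−1})·F(c, m, A) in Q. (This is the verification of Jiang's axiom (R3) for the paper's invariant f in matrix form: when A is the reduced colored Gassner matrix of a (c,c)-braid α with monomial ⟨α⟩ = m, the left-hand side is f of the closure of σ_n^{−2} i_{j₀}(α) and the right-hand side is (t_{c_n} − t_{c_n}^{−1}) times f of the closure of α.) -/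

import Mathlib

noncomputable section

open scoped BigOperators

/-- The multivariable Laurent polynomial ring `Λ_μ = ℤ[t₁^{±1},…,t_μ^{±1}]`,
realized as the group ℤ-algebra of `ℤ^μ`. -/
abbrev Lau (μ : ℕ) : Type := AddMonoidAlgebra ℤ (Fin μ →₀ ℤ)

instance (μ : ℕ) : IsDomain (Lau μ) := NoZeroDivisors.to_isDomain _

/-- The distinguished unit `t_i` of `Λ_μ`. -/
def tU {μ : ℕ} (i : Fin μ) : (Lau μ)ˣ where
  val := AddMonoidAlgebra.single (Finsupp.single i 1) 1
  inv := AddMonoidAlgebra.single (Finsupp.single i (-1)) 1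
  val_inv := by
    rw [AddMonoidAlgebra.single_mul_single, ← Finsupp.single_add]
    norm_num; rfl
  inv_val := by
    rw [AddMonoidAlgebra.single_mul_single, ← Finsupp.single_add]
    norm_num; rfl

/-- `T^c_i = t_{c_1} ⋯ t_{c_i}` (product of the first `i` values of the coloring,
zero-indexed: product over indices `k ≤ i`), as a unit of `Λ_μ`. -/
def TU {μ n : ℕ} (c : Fin n → Fin μ) (i : Fin n) : (Lau μ)ˣ :=
  ∏ k ∈ Finset.Iic i, tU (c k)

/-- The `n×n` matrix `[[A,0],[v,1]]` built from an `(n−1)×(n−1)` matrix `A`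
and a row vector `v` of length `n−1` (here `n = l+2`): the upper-left block is `A`,
the last column is `(0,…,0,1)ᵀ` and the last row begins with `v`. -/
def aug {μ l : ℕ} (A : Matrix (Fin (l+1)) (Fin (l+1)) (Lau μ)) (v : Fin (l+1) → Lau μ) :
    Matrix (Fin (l+2)) (Fin (l+2)) (Lau μ) := fun i j =>
  if hi : (i : ℕ) < l + 1 then
    if hj : (j : ℕ) < l + 1 then A ⟨i, hi⟩ ⟨j, hj⟩ else 0
  else
    if hj : (j : ℕ) < l + 1 then v ⟨j, hj⟩ else 1

/-- The pair `(A, v)` satisfies the boundary relation for the coloring `c`: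
for every column `j`, `∑_{i=1}^{n−1} (T^c_i − 1)(A − I)_{ij} = −(T^c_n − 1) v_j`. -/
def BoundaryRel {μ l : ℕ} (c : Fin (l+2) → Fin μ) (A : Matrix (Fin (l+1)) (Fin (l+1)) (Lau μ))
    (v : Fin (l+1) → Lau μ) : Prop :=
  ∀ j : Fin (l+1), ∑ i : Fin (l+1),
      ((TU c i.castSucc : Lau μ) - 1) * (A - 1) i j
    = -((TU c (Fin.last (l+1)) : Lau μ) - 1) * v j

/-- The `(l+2)×(l+2)` matrix equal to the identity except in its last `2×2`
diagonal block, which is `[[a,b],[c,d]]`. -/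
def last2Block {μ : ℕ} (l : ℕ) (a b c d : Lau μ) :
    Matrix (Fin (l+2)) (Fin (l+2)) (Lau μ) := fun i j =>
  if (i : ℕ) = l ∧ (j : ℕ) = l then a
  else if (i : ℕ) = l ∧ (j : ℕ) = l + 1 then b
  else if (i : ℕ) = l + 1 ∧ (j : ℕ) = l then c
  else if (i : ℕ) = l + 1 ∧ (j : ℕ) = l + 1 then d
  else if i = j then 1 else 0

/-- The ring endomorphism `g` of `Λ_μ` sending each `t_i` to `t_i²` (the ℤ-linear
extension of the exponent-doubling endomorphism of `ℤ^μ`). -/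
def gmap (μ : ℕ) : Lau μ →+* Lau μ :=
  AddMonoidAlgebra.mapDomainRingHom ℤ ((2 : ℕ) • AddMonoidHom.id (Fin μ →₀ ℤ))

/-- The quantity `F(c, m, A) = (−1)^{n+1} · m · g(det(A − I)) / (T^c_n − (T^c_n)^{−1})`
in the field of fractions `Q` of `Λ_μ`, for a coloring `c` of `n = k+1` strands,
a monomial `m` and a `k×k` matrix `A`. -/
def Fdef {μ k : ℕ} (c : Fin (k+1) → Fin μ) (m : Lau μ)
    (A : Matrix (Fin k) (Fin k) (Lau μ)) : FractionRing (Lau μ) :=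
  (-1) ^ (k + 2) * algebraMap (Lau μ) (FractionRing (Lau μ)) (m * gmap μ ((A - 1).det)) /
    (algebraMap (Lau μ) (FractionRing (Lau μ)) (TU c (Fin.last k) : Lau μ)
      - algebraMap (Lau μ) (FractionRing (Lau μ)) (((TU c (Fin.last k))⁻¹ : (Lau μ)ˣ) : Lau μ))

/-! The row vector `w = (T^c_1 − 1, …, T^c_n − 1)` is fixed by `M = [[A,0],[v,1]]` acting on the
right: this is exactly the boundary relation. Hence `w (M G'' − I) = w (G'' − I)`, which vanishes
except for its last entry `e = (T^c_{n−1} − 1)(1 − s⁻¹) + (T^c_n − 1)(s⁻¹t⁻¹ − 1)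
= (t⁻¹ − 1)(T^c_n − s⁻¹)`. Replacing the last row of `M G'' − I` by this combination of its rows
gives `(T^c_n − 1) det(M G'' − I) = e det(A − I)`. Applying `g`, which squares the monomials
`T^c_n`, `s`, `t`, and clearing denominators in `Q` yields the identity. -/

open Matrix

namespace Matrix

variable {R : Type*} [CommRing R] {k : ℕ}

theorem det_eq_mul_det_submatrix_of_row_last_eq_single (N : Matrix (Fin (k+1)) (Fin (k+1)) R)
    (e : R) (h : N (Fin.last k) = Pi.single (Fin.last k) e) :
    N.det = e * (N.submatrix Fin.castSucc Fin.castSucc).det := by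
  rw [det_succ_row N (Fin.last k), Fintype.sum_eq_single (Fin.last k) fun j hj => by
    simp [h, Pi.single_eq_of_ne hj]]
  simp [h, Fin.succAbove_last, ← two_mul]

theorem mul_det_eq_of_vecMul_eq_single (N : Matrix (Fin (k+1)) (Fin (k+1)) R)
    (w : Fin (k+1) → R) (e : R) (h : w ᵥ* N = Pi.single (Fin.last k) e) :
    w (Fin.last k) * N.det = e * (N.submatrix Fin.castSucc Fin.castSucc).det := by
  have hrow : ∑ i, w i • N i = w ᵥ* N := by
    ext j; simp [vecMul, dotProduct, Finset.sum_apply]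
  rw [← smul_eq_mul, ← det_updateRow_sum, hrow, h,
    det_eq_mul_det_submatrix_of_row_last_eq_single _ e (by simp)]
  congr 2
  ext i j
  simp

end Matrix

section Aug

variable {μ l : ℕ} (A : Matrix (Fin (l+1)) (Fin (l+1)) (Lau μ)) (v : Fin (l+1) → Lau μ)

@[simp] theorem aug_castSucc_castSucc (i j : Fin (l+1)) :
    aug A v i.castSucc j.castSucc = A i j := by
  simp [aug, i.is_le, j.is_le]

@[simp] theorem aug_castSucc_last (i : Fin (l+1)) :
    aug A v i.castSucc (Fin.last (l+1)) = 0 := by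
  simp [aug, i.is_le]

@[simp] theorem aug_last_castSucc (j : Fin (l+1)) :
    aug A v (Fin.last (l+1)) j.castSucc = v j := by
  simp [aug, j.is_le]

@[simp] theorem aug_last_last : aug A v (Fin.last (l+1)) (Fin.last (l+1)) = 1 := by
  simp [aug]

end Aug

section Last2Block

variable {μ l : ℕ} (b d : Lau μ)

theorem last2Block_apply_castSucc (k : Fin (l+2)) (j : Fin (l+1)) :
    last2Block l 1 b 0 d k j.castSucc
      = (1 : Matrix (Fin (l+2)) (Fin (l+2)) (Lau μ)) k j.castSucc := by
  simp only [last2Block, one_apply, Fin.ext_iff, Fin.val_castSucc]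
  split_ifs <;> first | rfl | omega

theorem last2Block_col_last (a c : Lau μ) :
    (fun k => last2Block l a b c d k (Fin.last (l+1)))
      = Pi.single (Fin.last l).castSucc b + Pi.single (Fin.last (l+1)) d := by
  funext k
  simp only [last2Block, Pi.add_apply, Pi.single_apply, Fin.ext_iff, Fin.val_castSucc,
    Fin.val_last, and_true]
  split_ifs <;> first | omega | simp

theorem mul_last2Block_apply_castSucc (M : Matrix (Fin (l+2)) (Fin (l+2)) (Lau μ))
    (i : Fin (l+2)) (j : Fin (l+1)) :
    (M * last2Block l 1 b 0 d) i j.castSucc = M i j.castSucc := by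
  simp [mul_apply, last2Block_apply_castSucc, one_apply]

theorem vecMul_last2Block (w : Fin (l+2) → Lau μ) :
    w ᵥ* last2Block l 1 b 0 d
      = w + Pi.single (Fin.last (l+1))
          (w (Fin.last l).castSucc * b + w (Fin.last (l+1)) * (d - 1)) := by
  funext j
  refine Fin.lastCases ?_ (fun j => ?_) j
  · show w ⬝ᵥ (fun k => last2Block l 1 b 0 d k (Fin.last (l+1))) = _
    rw [last2Block_col_last, dotProduct_add, dotProduct_single, dotProduct_single]
    simp only [Pi.add_apply, Pi.single_eq_same]
    ring
  · simp [vecMul, dotProduct, last2Block_apply_castSucc, one_apply,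
      (Fin.castSucc_lt_last j).ne]

end Last2Block

section Boundary

variable {μ : ℕ}

def boundaryVec {n : ℕ} (c : Fin n → Fin μ) : Fin n → Lau μ := fun k => (TU c k : Lau μ) - 1

variable {l : ℕ} {c : Fin (l+2) → Fin μ} {A : Matrix (Fin (l+1)) (Fin (l+1)) (Lau μ)}
  {v : Fin (l+1) → Lau μ}

theorem BoundaryRel.vecMul_aug (hb : BoundaryRel c A v) :
    boundaryVec c ᵥ* aug A v = boundaryVec c := by
  funext j
  refine Fin.lastCases ?_ (fun j => ?_) j
  · simp [vecMul, dotProduct, Fin.sum_univ_castSucc]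
  · have h := hb j
    simp only [Matrix.sub_apply, mul_sub, Finset.sum_sub_distrib, one_apply, mul_ite,
      mul_one, mul_zero, Finset.sum_ite_eq', Finset.mem_univ, if_true] at h
    simp only [vecMul, dotProduct]
    rw [Fin.sum_univ_castSucc]
    simp only [aug_castSucc_castSucc, aug_last_castSucc, boundaryVec]
    linear_combination h

theorem BoundaryRel.det_aug_mul_last2Block_sub_one (hb : BoundaryRel c A v) (b d : Lau μ) :
    boundaryVec c (Fin.last (l+1)) * (aug A v * last2Block l 1 b 0 d - 1).det
      = (boundaryVec c (Fin.last l).castSucc * b + boundaryVec c (Fin.last (l+1)) * (d - 1))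
          * (A - 1).det := by
  rw [mul_det_eq_of_vecMul_eq_single _ _ _ ?_]
  · congr 2
    ext i j
    simp [mul_last2Block_apply_castSucc, one_apply]
  · rw [vecMul_sub, ← vecMul_vecMul, hb.vecMul_aug, vecMul_one,
      vecMul_last2Block, add_sub_cancel_left]

end Boundary

section Monomials

variable {μ : ℕ}

theorem TU_last {n : ℕ} (c : Fin (n+1) → Fin μ) : TU c (Fin.last n) = ∏ k, tU (c k) := by
  rw [TU, ← Fin.top_eq_last, Finset.Iic_top]

theorem TU_castSucc {n : ℕ} (c : Fin (n+1) → Fin μ) (i : Fin n) :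
    TU c i.castSucc = TU (fun k => c k.castSucc) i := by
  rw [TU, ← Fin.map_castSuccEmb_Iic, Finset.prod_map]
  rfl

theorem TU_snoc_last {n : ℕ} (c : Fin (n+1) → Fin μ) (j : Fin μ) :
    TU (Fin.snoc c j : Fin (n+2) → Fin μ) (Fin.last (n+1)) = TU c (Fin.last n) * tU j := by
  rw [TU_last, TU_last, Fin.prod_univ_castSucc]
  simp

theorem TU_castSucc_last_mul {n : ℕ} (c : Fin (n+2) → Fin μ) :
    TU c (Fin.last n).castSucc * tU (c (Fin.last (n+1))) = TU c (Fin.last (n+1)) := by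
  rw [TU_castSucc, TU_last, TU_last, Fin.prod_univ_castSucc (fun k => tU (c k))]

theorem TU_val_eq_single {n : ℕ} (c : Fin n → Fin μ) (i : Fin n) :
    (TU c i : Lau μ)
      = AddMonoidAlgebra.single (∑ k ∈ Finset.Iic i, Finsupp.single (c k) 1) 1 := by
  rw [TU, Units.coe_prod]
  exact (AddMonoidAlgebra.prod_single _ _ _).trans (by simp)

theorem gmap_single_one (a : Fin μ →₀ ℤ) :
    gmap μ (AddMonoidAlgebra.single a 1) = AddMonoidAlgebra.single a 1 ^ 2 := by
  rw [sq, AddMonoidAlgebra.single_mul_single, mul_one]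
  exact (AddMonoidAlgebra.mapDomain_single ..).trans (by simp [two_nsmul])

theorem gmap_TU {n : ℕ} (c : Fin n → Fin μ) (i : Fin n) :
    gmap μ (TU c i : Lau μ) = (TU c i : Lau μ) ^ 2 := by
  rw [TU_val_eq_single, gmap_single_one]

theorem gmap_tU_inv (i : Fin μ) :
    gmap μ ((tU i)⁻¹ : (Lau μ)ˣ) = (((tU i)⁻¹ : (Lau μ)ˣ) : Lau μ) ^ 2 :=
  gmap_single_one _

theorem TU_sq_ne_one {n : ℕ} (c : Fin n → Fin μ) (i : Fin n) : (TU c i : Lau μ) ^ 2 ≠ 1 := by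
  rw [TU_val_eq_single, sq, AddMonoidAlgebra.single_mul_single, mul_one,
    AddMonoidAlgebra.one_def]
  set a : Fin μ →₀ ℤ := ∑ k ∈ Finset.Iic i, Finsupp.single (c k) 1
  have ha : 0 < a (c i) := by
    simp only [a, Finsupp.finsetSum_apply, Finsupp.single_apply]
    exact Finset.sum_pos' (fun k _ => by split_ifs <;> simp)
      ⟨i, Finset.mem_Iic.2 le_rfl, by simp⟩
  intro h
  have := congrArg (· (c i)) (AddMonoidAlgebra.single_left_injective one_ne_zero h)
  simp only [Finsupp.add_apply, Finsupp.coe_zero, Pi.zero_apply] at this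
  omega

end Monomials

theorem div_sub_inv_eq_of_det_relation {K : Type*} [Field K] (k : ℕ) {T t s m D DA : K}
    (hT : T ≠ 0) (ht : t ≠ 0) (hs : s ≠ 0) (hT2 : T ^ 2 ≠ 1) (hTs : (T * s) ^ 2 ≠ 1)
    (h : (T ^ 2 - 1) * D
      = ((T ^ 2 * t⁻¹ ^ 2 - 1) * (1 - s⁻¹ ^ 2) + (T ^ 2 - 1) * (s⁻¹ ^ 2 * t⁻¹ ^ 2 - 1)) * DA) :
    (-1) ^ (k + 2 + 2) * (s * t * m * D) / (T * s - (T * s)⁻¹)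
      = (t - t⁻¹) * ((-1) ^ (k + 1 + 2) * (m * DA) / (T - T⁻¹)) := by
  have hT2' : T ^ 2 - 1 ≠ 0 := sub_ne_zero.2 hT2
  have hTs' : T ^ 2 * s ^ 2 - 1 ≠ 0 := sub_ne_zero.2 (by rwa [← mul_pow])
  field_simp at h ⊢
  linear_combination (-1) ^ (k + 2 + 2) * m * h

theorem algebraMap_TU_sq_ne_one {μ n : ℕ} (c : Fin n → Fin μ) (i : Fin n) :
    algebraMap (Lau μ) (FractionRing (Lau μ)) (TU c i) ^ 2 ≠ 1 := by
  rw [← map_pow, ← map_one (algebraMap (Lau μ) (FractionRing (Lau μ)))]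
  exact (IsFractionRing.injective _ _).ne (TU_sq_ne_one c i)

/-- the verification of Jiang's axiom (R3) for the invariant `f`, in
matrix form. With `t = t_{c_n}`, `s = t_{j₀}`, `c⁺ = (c_1,…,c_n,j₀)`,
`M = [[A,0],[v,1]]` and `G''` the identity except for the last `2×2` diagonal
block `[[1, 1 − s⁻¹],[0, s⁻¹ t⁻¹]]`, if `(A,v)` satisfies the boundary relation for
`c` then for every `m ∈ Λ_μ`:
`F(c⁺, s·t·m, M·G'') = (t − t⁻¹) · F(c, m, A)` in `Q` (here `n = l + 2 ≥ 2`). -/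
theorem stmt8 {μ l : ℕ} (c : Fin (l+2) → Fin μ) (j₀ : Fin μ)
    (A : Matrix (Fin (l+1)) (Fin (l+1)) (Lau μ)) (v : Fin (l+1) → Lau μ)
    (hb : BoundaryRel c A v) (m : Lau μ) :
    Fdef (Fin.snoc c j₀)
        ((tU j₀ : Lau μ) * (tU (c (Fin.last (l+1))) : Lau μ) * m)
        (aug A v *
          last2Block l 1 (1 - (((tU j₀)⁻¹ : (Lau μ)ˣ) : Lau μ)) 0
            ((((tU j₀)⁻¹ : (Lau μ)ˣ) : Lau μ) *
              (((tU (c (Fin.last (l+1))))⁻¹ : (Lau μ)ˣ) : Lau μ)))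
      = (algebraMap (Lau μ) (FractionRing (Lau μ)) (tU (c (Fin.last (l+1))) : Lau μ)
          - algebraMap (Lau μ) (FractionRing (Lau μ))
              (((tU (c (Fin.last (l+1))))⁻¹ : (Lau μ)ˣ) : Lau μ)) *
          Fdef c m A := by
  have hdet := hb.det_aug_mul_last2Block_sub_one (1 - ((tU j₀)⁻¹ : (Lau μ)ˣ))
    (((tU j₀)⁻¹ : (Lau μ)ˣ) * ((tU (c (Fin.last (l+1))))⁻¹ : (Lau μ)ˣ))
  rw [boundaryVec, boundaryVec, eq_mul_inv_of_mul_eq (TU_castSucc_last_mul c)] at hdet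
  have hdetQ := congrArg (fun x => algebraMap (Lau μ) (FractionRing (Lau μ)) (gmap μ x)) hdet
  simp only [map_mul, map_sub, map_add, map_one, Units.val_mul, gmap_TU, gmap_tU_inv, map_pow,
    map_units_inv] at hdetQ
  have hTs := algebraMap_TU_sq_ne_one (Fin.snoc c j₀ : Fin (l+3) → Fin μ) (Fin.last (l+2))
  rw [TU_snoc_last, Units.val_mul, map_mul] at hTs
  rw [Fdef, Fdef, TU_snoc_last]
  simp only [map_mul, map_units_inv, Units.val_mul]
  have hunit (u : (Lau μ)ˣ) : algebraMap (Lau μ) (FractionRing (Lau μ)) u ≠ 0 :=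
    (u.isUnit.map _).ne_zero
  exact div_sub_inv_eq_of_det_relation l (hunit _) (hunit _) (hunit _)
    (algebraMap_TU_sq_ne_one c _) hTs hdetQ
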